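/- arXiv:2601.20543 — 2 statements merged into one kernel-verified Lean document; each statement's English description precedes it below -/
import Mathlib

section
/- Let p be an odd prime with p ≡ 3 (mod 4), and let L = ℚ(√(2p), √(-1)). Then the prime p is ramified in ℚ(√(2p)), and the unique prime of ℚ(√(2p)) above p is inert in L. -/
/-!
Write `L₀ = ℚ(α)` with `α² = 2p` and `L = L₀(β)` with `β² = -1`; both steps have degree at most
`2`, so over each prime the sum of the products `e·f` is at most `2`. In `𝓞 L₀` the ideal
`(α, p)` squares to `(p)` (as `p = p² - ⌊p/2⌋·α²` with `p` odd), so every prime above `p` has even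
ramification index: there is a single prime `v`, with `e = 2` and `f = 1`. Hence the residue
field of `v` is `𝔽_p`, in which `-1` is not a square since `p ≡ 3 (mod 4)`; but `-1 = β²` is a
square in the residue field of every prime `w` of `𝓞 L` above `v`, so `f(w | v) ≥ 2`. This forces
a single `w` with `e = 1`, `f = 2`, i.e. `v 𝓞 L = w`.
-/

open NumberField Module Polynomial IntermediateField Ideal UniqueFactorizationMonoid

theorem isIntegral_of_sq_eq_algebraMap {R A : Type*} [CommRing R] [Ring A] [Algebra R A]
    {a : A} {r : R} (ha : a ^ 2 = algebraMap R A r) : IsIntegral R a :=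
  .of_pow two_pos (ha ▸ isIntegral_algebraMap)

section QuadraticExtension

variable {F E : Type*} [Field F] [Field E] [Algebra F E] {γ : E} {c : F}

theorem natDegree_minpoly_le_two_of_sq_eq_algebraMap (hγ : γ ^ 2 = algebraMap F E c) :
    (minpoly F γ).natDegree ≤ 2 := by
  have h := minpoly.degree_le_of_ne_zero F γ (X_pow_sub_C_ne_zero two_pos c) (by simp [hγ])
  rw [degree_X_pow_sub_C two_pos] at h
  exact natDegree_le_of_degree_le h

theorem finrank_eq_natDegree_minpoly_of_adjoin_eq_top (hγ : IsIntegral F γ) (htop : F⟮γ⟯ = ⊤) :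
    finrank F E = (minpoly F γ).natDegree := by
  rw [← finrank_top', ← htop, adjoin.finrank hγ]

theorem finiteDimensional_of_sq_eq_algebraMap (hγ : γ ^ 2 = algebraMap F E c)
    (htop : F⟮γ⟯ = ⊤) : FiniteDimensional F E :=
  have hint := isIntegral_of_sq_eq_algebraMap hγ
  Module.finite_of_finrank_pos <| by
    rw [finrank_eq_natDegree_minpoly_of_adjoin_eq_top hint htop]
    exact minpoly.natDegree_pos hint

theorem finrank_le_two_of_sq_eq_algebraMap (hγ : γ ^ 2 = algebraMap F E c) (htop : F⟮γ⟯ = ⊤) :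
    finrank F E ≤ 2 := by
  rw [finrank_eq_natDegree_minpoly_of_adjoin_eq_top (isIntegral_of_sq_eq_algebraMap hγ) htop]
  exact natDegree_minpoly_le_two_of_sq_eq_algebraMap hγ

end QuadraticExtension

theorem adjoin_simple_eq_top_of_adjoin_pair_eq_top {F K E : Type*} [Field F] [Field K] [Field E]
    [Algebra F K] [Algebra F E] [Algebra K E] [IsScalarTower F K E] {a : K} {b : E}
    (h : adjoin F {algebraMap K E a, b} = ⊤) : K⟮b⟯ = ⊤ := by
  rw [← restrictScalars_eq_top_iff (K := F), eq_top_iff, ← h, adjoin_le_iff,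
    Set.insert_subset_iff, Set.singleton_subset_iff]
  exact ⟨algebraMap_mem _ a, mem_adjoin_simple_self K b⟩

theorem isSquare_of_isSquare_algebraMap_of_finrank_eq_one {K L : Type*} [Field K] [Ring L]
    [Algebra K L] (h : finrank K L = 1) {a : K} (ha : IsSquare (algebraMap K L a)) :
    IsSquare a := by
  let e := RingEquiv.ofBijective _ (Algebra.finrank_eq_one_iff_bijective_algebraMap.mp h)
  simpa only [e.symm_apply_apply] using ha.map e.symm (a := e a)

theorem not_isSquare_neg_one_int_quotient {p : ℕ} [Fact p.Prime] (hmod : p % 4 = 3) :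
    ¬IsSquare (-1 : ℤ ⧸ span {(p : ℤ)}) := fun h ↦
  ZMod.exists_sq_eq_neg_one_iff.mp (by simpa using h.map (Int.quotientSpanNatEquivZMod p)) hmod

theorem isSquare_neg_one_quotient_of_sq_eq_neg_one {S : Type*} [CommRing S] (w : Ideal S)
    {β : S} (hβ : β ^ 2 = -1) : IsSquare (-1 : S ⧸ w) :=
  ⟨Ideal.Quotient.mk w β, by rw [← map_mul, ← sq, hβ, map_neg, map_one]⟩

theorem span_pair_sq_eq_span_singleton {R : Type*} [CommRing R] {π x k : R}
    (hx : x = 2 * k + 1) (hπ : π ^ 2 = 2 * x) : span {π, x} ^ 2 = span {x} := by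
  rw [sq, span_pair_mul_span_pair]
  apply le_antisymm
  · simp only [span_le, Set.insert_subset_iff, Set.singleton_subset_iff, SetLike.mem_coe,
      mem_span_singleton]
    exact ⟨⟨2, by rw [← sq, hπ, mul_comm]⟩, dvd_mul_left _ _, dvd_mul_right _ _,
      dvd_mul_right _ _⟩
  · rw [span_singleton_le_iff_mem]
    have hx' : x = x * x - k * (π * π) := by linear_combination k * hπ - x * hx
    have : x * x - k * (π * π) ∈ span {π * π, π * x, x * π, x * x} :=
      sub_mem (subset_span (by simp)) (mul_mem_left _ _ (subset_span (by simp)))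
    rwa [← hx'] at this

theorem mem_primesOver_span_singleton_iff {R S : Type*} [CommRing R] [CommRing S] [Algebra R S]
    {x : R} [(span {x}).IsMaximal] {P : Ideal S} :
    P ∈ (span {x}).primesOver S ↔ P.IsPrime ∧ algebraMap R S x ∈ P := by
  refine ⟨fun ⟨hP, _⟩ ↦ ⟨hP, (mem_of_liesOver P _ x).mp (mem_span_singleton_self x)⟩,
    fun ⟨hP, hx⟩ ↦ ⟨hP, ⟨?_⟩⟩⟩
  refine IsMaximal.eq_of_le ‹_› (comap_ne_top _ hP.ne_top) ?_
  rwa [span_le, Set.singleton_subset_iff, SetLike.mem_coe, mem_comap]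

theorem dvd_ramificationIdx_of_map_eq_pow {R S : Type*} [CommRing R] [CommRing S] [Algebra R S]
    [IsDedekindDomain S] {p : Ideal R} (q : Ideal S) [q.LiesOver p] {I : Ideal S} {n : ℕ}
    (hp0 : p.map (algebraMap R S) ≠ ⊥) (h : p.map (algebraMap R S) = I ^ n) :
    n ∣ q.ramificationIdx R := by
  rw [IsDedekindDomain.ramificationIdx_eq_normalizedFactors_count p q hp0, h,
    normalizedFactors_pow, Multiset.count_nsmul]
  exact dvd_mul_right _ _

theorem not_isSquare_neg_one_of_inertiaDeg_eq_one {R S : Type*} [CommRing R] [CommRing S]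
    [Algebra R S] {p : Ideal R} [p.IsMaximal] {q : Ideal S} [q.IsMaximal] [q.LiesOver p]
    (hq : q.inertiaDeg R = 1) (hp : ¬IsSquare (-1 : R ⧸ p)) : ¬IsSquare (-1 : S ⧸ q) := by
  rw [inertiaDeg_eq_of_isMaximal p q] at hq
  let := Quotient.field p
  let := Quotient.field q
  exact fun h ↦ hp (isSquare_of_isSquare_algebraMap_of_finrank_eq_one hq (by simpa using h))

section DegreeTwo

variable {R S : Type*} [CommRing R] [CommRing S] [Algebra R S] [Module.Finite R S] [Module.Flat R S]

theorem primesOver_eq_singleton_of_finrank_le_two [IsDomain R] {p : Ideal R} [p.IsPrime]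
    [Fintype (p.primesOver S)] (hrank : finrank R S ≤ 2)
    (hge : ∀ q ∈ p.primesOver S, 2 ≤ q.ramificationIdx R * q.inertiaDeg R)
    {q : Ideal S} (hq : q ∈ p.primesOver S) :
    p.primesOver S = {q} ∧ q.ramificationIdx R * q.inertiaDeg R = 2 := by
  set ef : p.primesOver S → ℕ := fun q ↦ q.1.ramificationIdx R * q.1.inertiaDeg R
  have hsum : ∑ q, ef q ≤ 2 := (sum_ramification_inertia_eq_finrank p S).trans_le hrank
  refine ⟨Set.eq_singleton_iff_unique_mem.mpr ⟨hq, fun q' hq' ↦ ?_⟩, ?_⟩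
  · by_contra hne
    have : ef ⟨q, hq⟩ + ef ⟨q', hq'⟩ ≤ ∑ q, ef q := by
      rw [← Finset.sum_pair (by simpa [Subtype.ext_iff] using Ne.symm hne)]
      exact Finset.sum_le_sum_of_subset (Finset.subset_univ _)
    have : 2 ≤ ef ⟨q, hq⟩ := hge q hq
    have : 2 ≤ ef ⟨q', hq'⟩ := hge q' hq'
    omega
  · exact le_antisymm
      ((Finset.single_le_sum (fun _ _ ↦ Nat.zero_le _) (Finset.mem_univ ⟨q, hq⟩)).trans hsum)
      (hge q hq)

variable [IsDedekindDomain S] [Module.IsTorsionFree R S]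

theorem exists_map_eq_inertiaDeg_eq_two_of_not_isSquare_neg_one [IsDedekindDomain R]
    (hrank : finrank R S ≤ 2) {v : Ideal R} [v.IsMaximal] (hv0 : v ≠ ⊥)
    (hv : ¬IsSquare (-1 : R ⧸ v)) {β : S} (hβ : β ^ 2 = -1) :
    ∃ w ∈ v.primesOver S, v.map (algebraMap R S) = w ∧ w.inertiaDeg R = 2 := by
  have two_le : ∀ w ∈ v.primesOver S, 2 ≤ w.inertiaDeg R := by
    rintro w ⟨_, _⟩
    have := IsMaximal.of_liesOver_isMaximal w v
    have := inertiaDeg_pos w R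
    have : w.inertiaDeg R ≠ 1 := fun h ↦ not_isSquare_neg_one_of_inertiaDeg_eq_one h hv
      (isSquare_neg_one_quotient_of_sq_eq_neg_one w hβ)
    omega
  have hge : ∀ w ∈ v.primesOver S, 2 ≤ w.ramificationIdx R * w.inertiaDeg R := fun w hw ↦ by
    have := hw.1
    exact (two_le w hw).trans (Nat.le_mul_of_pos_left _ (ramificationIdx_pos w R))
  obtain ⟨⟨w, hw⟩⟩ := nonempty_primesOver (S := S) v
  obtain ⟨hsing, hef⟩ := primesOver_eq_singleton_of_finrank_le_two hrank hge hw
  have := two_le w hw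
  have he : w.ramificationIdx R = 1 := by
    have := hw.1
    have := ramificationIdx_pos w R
    nlinarith
  refine ⟨w, hw, ?_, by rwa [he, one_mul] at hef⟩
  rw [map_algebraMap_eq_finsetProd_pow hv0]
  simp [hsing, he]

end DegreeTwo

theorem primesOver_eq_singleton_of_sq_eq_two_mul {K : Type*} [Field K] [NumberField K]
    (hK : finrank ℚ K ≤ 2) {p : ℕ} [Fact p.Prime] (hodd : p % 2 = 1) {π : 𝓞 K}
    (hπ : π ^ 2 = 2 * p) {v : Ideal (𝓞 K)} (hv : v ∈ (span {(p : ℤ)}).primesOver (𝓞 K)) :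
    (span {(p : ℤ)}).primesOver (𝓞 K) = {v} ∧ v.ramificationIdx ℤ = 2 ∧ v.inertiaDeg ℤ = 1 := by
  have hmap : (span {(p : ℤ)}).map (algebraMap ℤ (𝓞 K)) = span {π, (p : 𝓞 K)} ^ 2 := by
    rw [map_span, Set.image_singleton, map_natCast,
      span_pair_sq_eq_span_singleton (k := ((p / 2 : ℕ) : 𝓞 K)) (by norm_cast; omega) hπ]
  have hp0 : (span {(p : ℤ)}).map (algebraMap ℤ (𝓞 K)) ≠ ⊥ :=
    map_ne_bot_of_ne_bot (by simpa using (Fact.out : p.Prime).ne_zero)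
  have two_le : ∀ q ∈ (span {(p : ℤ)}).primesOver (𝓞 K), 2 ≤ q.ramificationIdx ℤ := by
    rintro q ⟨_, _⟩
    exact Nat.le_of_dvd (ramificationIdx_pos q ℤ) (dvd_ramificationIdx_of_map_eq_pow q hp0 hmap)
  have hge : ∀ q ∈ (span {(p : ℤ)}).primesOver (𝓞 K),
      2 ≤ q.ramificationIdx ℤ * q.inertiaDeg ℤ := fun q hq ↦ by
    have := hq.1
    exact (two_le q hq).trans (Nat.le_mul_of_pos_right _ (inertiaDeg_pos q ℤ))
  obtain ⟨hsing, hef⟩ :=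
    primesOver_eq_singleton_of_finrank_le_two (by rwa [RingOfIntegers.rank]) hge hv
  have := hv.1
  have := two_le v hv
  have := Nat.le_mul_of_pos_right (v.ramificationIdx ℤ) (inertiaDeg_pos v ℤ)
  have he : v.ramificationIdx ℤ = 2 := by omega
  rw [he] at hef
  exact ⟨hsing, he, by omega⟩

theorem RingOfIntegers.exists_sq_eq_intCast {K : Type*} [Field K] {a : K} {n : ℤ}
    (ha : a ^ 2 = n) : ∃ b : 𝓞 K, b ^ 2 = n :=
  ⟨⟨a, isIntegral_of_sq_eq_algebraMap (r := n) (by simpa using ha)⟩, RingOfIntegers.ext ha⟩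

theorem ramified_and_inert_of_sq_eq_two_mul_of_sq_eq_neg_one {K L : Type*} [Field K] [Field L]
    [NumberField K] [NumberField L] [Algebra K L] {p : ℕ} [Fact p.Prime] (hodd : p % 2 = 1)
    (hmod : p % 4 = 3) (hK : finrank ℚ K ≤ 2) (hKL : finrank K L ≤ 2) {π : 𝓞 K}
    (hπ : π ^ 2 = 2 * p) {β : 𝓞 L} (hβ : β ^ 2 = -1) :
    (∃! v : Ideal (𝓞 K), v.IsPrime ∧ (p : 𝓞 K) ∈ v) ∧
    ∀ v : Ideal (𝓞 K), v.IsPrime → (p : 𝓞 K) ∈ v →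
      ramificationIdx' (span {(p : ℤ)}) v = 2 ∧ (map (algebraMap (𝓞 K) (𝓞 L)) v).IsPrime ∧
      inertiaDeg' v (map (algebraMap (𝓞 K) (𝓞 L)) v) = 2 := by
  have hp0 : span {(p : ℤ)} ≠ ⊥ := by simpa using (Fact.out : p.Prime).ne_zero
  have hprimes (v : Ideal (𝓞 K)) :
      v ∈ (span {(p : ℤ)}).primesOver (𝓞 K) ↔ v.IsPrime ∧ (p : 𝓞 K) ∈ v := by
    rw [mem_primesOver_span_singleton_iff, map_natCast]
  obtain ⟨⟨v, hv⟩⟩ := nonempty_primesOver (S := 𝓞 K) (span {(p : ℤ)})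
  obtain ⟨hsing, he, hf⟩ := primesOver_eq_singleton_of_sq_eq_two_mul hK hodd hπ hv
  have := hv.1
  have := hv.2
  have := IsMaximal.of_liesOver_isMaximal v (span {(p : ℤ)})
  obtain ⟨w, hw, hmap, hfw⟩ := exists_map_eq_inertiaDeg_eq_two_of_not_isSquare_neg_one
    (by rwa [← IsFractionRing.finrank_eq (𝓞 K) K (𝓞 L) L]) (ne_bot_of_liesOver_of_ne_bot hp0 v)
    (not_isSquare_neg_one_of_inertiaDeg_eq_one hf (not_isSquare_neg_one_int_quotient hmod)) hβ
  refine ⟨⟨v, (hprimes v).1 hv, fun v' hv' ↦ ?_⟩, fun v' hv'p hv' ↦ ?_⟩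
  · simpa [hsing] using (hprimes v').2 hv'
  obtain rfl : v = v' := by simpa [hsing, eq_comm] using (hprimes v').2 ⟨hv'p, hv'⟩
  have := hw.1
  have := hw.2
  have := IsMaximal.of_liesOver_isMaximal w v
  rw [hmap, ramificationIdx'_eq_ramificationIdx _ _ hp0, inertiaDeg'_eq_inertiaDeg v w]
  exact ⟨he, inferInstance, hfw⟩

/-- For an odd prime `p ≡ 3 (mod 4)` and `L = ℚ(√(2p), √-1)`: the prime `p` is ramified
in `L₀ = ℚ(√(2p))` (unique prime `v` above `p`, with ramification index `2` over `ℤ`),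
and `v` is inert in `L`: `v·𝓞 L` is prime with residue degree `2`. -/
theorem stmt5 (p : ℕ) (hp : p.Prime) (hodd : p % 2 = 1) (hmod : p % 4 = 3)
    (L₀ L : Type) [Field L₀] [Field L] [Algebra ℚ L₀] [Algebra ℚ L]
    [Algebra L₀ L] [IsScalarTower ℚ L₀ L]
    (α : L₀) (hα : α ^ 2 = (2 * p : L₀))
    (hL₀ : IntermediateField.adjoin ℚ ({α} : Set L₀) = ⊤)
    (β : L) (hβ : β ^ 2 = -1)
    (hL : IntermediateField.adjoin ℚ ({algebraMap L₀ L α, β} : Set L) = ⊤) :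
    (∃! v : Ideal (𝓞 L₀), v.IsPrime ∧ (p : 𝓞 L₀) ∈ v) ∧
    ∀ v : Ideal (𝓞 L₀), v.IsPrime → (p : 𝓞 L₀) ∈ v →
      Ideal.ramificationIdx' (Ideal.span {(p : ℤ)}) v = 2 ∧
      (Ideal.map (algebraMap (𝓞 L₀) (𝓞 L)) v).IsPrime ∧
      Ideal.inertiaDeg' v
        (Ideal.map (algebraMap (𝓞 L₀) (𝓞 L)) v) = 2 := by
  have : Fact p.Prime := ⟨hp⟩
  have : CharZero L₀ := charZero_of_injective_algebraMap (algebraMap ℚ L₀).injective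
  have : CharZero L := charZero_of_injective_algebraMap (algebraMap ℚ L).injective
  -- `NumberField` is stated for the canonical `ℚ`-algebra structure, to which the given ones are
  -- equal.
  obtain rfl : ‹Algebra ℚ L₀› = DivisionRing.toRatAlgebra := Subsingleton.elim _ _
  obtain rfl : ‹Algebra ℚ L› = DivisionRing.toRatAlgebra := Subsingleton.elim _ _
  have hαℚ : α ^ 2 = algebraMap ℚ L₀ (2 * p) := by simp [hα]
  have hβL₀ : β ^ 2 = algebraMap L₀ L (-1) := by simp [hβ]
  have hL₀L := adjoin_simple_eq_top_of_adjoin_pair_eq_top hL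
  have := finiteDimensional_of_sq_eq_algebraMap hαℚ hL₀
  have := finiteDimensional_of_sq_eq_algebraMap hβL₀ hL₀L
  have := Module.Finite.trans (R := ℚ) L₀ L
  have : NumberField L₀ := ⟨⟩
  have : NumberField L := ⟨⟩
  obtain ⟨π, hπ⟩ :=
    RingOfIntegers.exists_sq_eq_intCast (a := α) (n := 2 * p) (by push_cast; exact hα)
  obtain ⟨βO, hβO⟩ :=
    RingOfIntegers.exists_sq_eq_intCast (a := β) (n := -1) (by push_cast; exact hβ)
  exact ramified_and_inert_of_sq_eq_two_mul_of_sq_eq_neg_one hodd hmod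
    (finrank_le_two_of_sq_eq_algebraMap hαℚ hL₀) (finrank_le_two_of_sq_eq_algebraMap hβL₀ hL₀L)
    (by exact_mod_cast hπ) (by exact_mod_cast hβO)
end

section
/- Let π = √3·ζ₃ and L = ℚ(π) = ℚ(ζ₁₂) with ring of integers O_L = ℤ[ζ₁₂]. Then the order R_sp = ℤ[π, 3·π^{-1}, π²/3] has index 3 in O_L. -/
/-!
`O_L = ℤ[ξ]` holds for every cyclotomic field, and `ℤ[ξ]` has `ℤ`-basis `1, ξ, ξ², ξ³` because `ξ⁴ = ξ² - 1`.
In this basis `π = 2ξ³ - ξ`, `3π⁻¹ = -ξ³ - ξ` and `π²/3 = -ξ²`, so `R_sp` consists of the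
`a + bξ + cξ² + dξ³` with `b ≡ d (mod 3)`. This is the kernel of the surjection
`ℤ[ξ] → ℤ/3ℤ`, `a + bξ + cξ² + dξ³ ↦ b - d`, hence has index `3`.
-/

open Polynomial

theorem IsPrimitiveRoot.pow_four_eq_sq_sub_one {R : Type*} [CommRing R] [IsDomain R] {ξ : R}
    (hξ : IsPrimitiveRoot ξ 12) : ξ ^ 4 = ξ ^ 2 - 1 := by
  have h6 : ξ ^ 6 + 1 = 0 := by
    have h : (ξ ^ 6 - 1) * (ξ ^ 6 + 1) = 0 := by linear_combination hξ.pow_eq_one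
    refine (mul_eq_zero.1 h).resolve_left fun h' ↦ ?_
    exact hξ.pow_ne_one_of_pos_of_lt (by norm_num) (by norm_num) (sub_eq_zero.1 h')
  have h : (ξ ^ 2 + 1) * (ξ ^ 4 - ξ ^ 2 + 1) = 0 := by linear_combination h6
  have h4 : ξ ^ 4 - ξ ^ 2 + 1 = 0 := by
    refine (mul_eq_zero.1 h).resolve_left fun h' ↦ ?_
    exact hξ.pow_ne_one_of_pos_of_lt (l := 4) (by norm_num) (by norm_num)
      (by linear_combination (ξ ^ 2 - 1) * h')
  linear_combination h4

theorem IsPrimitiveRoot.isCyclotomicExtension_of_adjoin_eq_top {K L : Type*} [Field K] [Field L]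
    [Algebra K L] {n : ℕ} [NeZero n] {ξ : L} (hξ : IsPrimitiveRoot ξ n)
    (hL : IntermediateField.adjoin K {ξ} = ⊤) : IsCyclotomicExtension {n} K L := by
  have hint : IsIntegral K ξ :=
    ⟨X ^ n - 1, monic_X_pow_sub_C 1 (NeZero.ne n), by simp [hξ.pow_eq_one]⟩
  have htop : Algebra.adjoin K {ξ} = ⊤ := by
    rw [← IntermediateField.adjoin_simple_toSubalgebra_of_isAlgebraic hint.isAlgebraic, hL,
      IntermediateField.top_toSubalgebra]
  refine (IsCyclotomicExtension.iff_singleton n K L).2 ⟨⟨ξ, hξ⟩, fun x ↦ ?_⟩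
  have hx : x ∈ Algebra.adjoin K {ξ} := by rw [htop]; exact Algebra.mem_top
  refine Algebra.adjoin_mono ?_ hx
  rw [Set.singleton_subset_iff]
  exact hξ.pow_eq_one

theorem IsPrimitiveRoot.integralClosure_eq_adjoin {K : Type*} [Field K] [CharZero K] {n : ℕ}
    [NeZero n] [IsCyclotomicExtension {n} ℚ K] {ζ : K} (hζ : IsPrimitiveRoot ζ n) :
    integralClosure ℤ K = Algebra.adjoin ℤ {ζ} := by
  have := IsCyclotomicExtension.Rat.isIntegralClosure_adjoin_singleton hζ
  ext x
  rw [mem_integralClosure_iff, IsIntegralClosure.isIntegral_iff (A := Algebra.adjoin ℤ {ζ})]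
  exact ⟨fun ⟨y, hy⟩ ↦ hy ▸ y.2, fun hx ↦ ⟨⟨x, hx⟩, rfl⟩⟩

theorem IsPrimitiveRoot.exists_basis_adjoin_int {K : Type*} [Field K] [CharZero K] {n d : ℕ}
    {ζ : K} (hζ : IsPrimitiveRoot ζ n) (hn : 0 < n) (hd : n.totient = d) :
    ∃ B : Module.Basis (Fin d) ℤ (Algebra.adjoin ℤ {ζ}), ∀ i, (B i : K) = ζ ^ (i : ℕ) := by
  let pb := Algebra.adjoin.powerBasis' (hζ.isIntegral hn)
  have hdim : pb.dim = d := by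
    rw [Algebra.adjoin.powerBasis'_dim, ← cyclotomic_eq_minpoly hζ hn, natDegree_cyclotomic, hd]
  refine ⟨pb.basis.reindex (finCongr hdim), fun i ↦ ?_⟩
  rw [Module.Basis.reindex_apply, PowerBasis.coe_basis, Algebra.adjoin.powerBasis'_gen,
    SubmonoidClass.coe_pow]
  rfl

section SpOrder

variable {A : Type*} [CommRing A] {ξ : A}

/-- The order `R_sp`, written in the coordinates `1, ξ, ξ², ξ³`. -/
def spOrder (hΦ : ξ ^ 4 = ξ ^ 2 - 1) : Subalgebra ℤ A where
  carrier := {x | ∃ a b c d : ℤ, x = a + b * ξ + c * ξ ^ 2 + d * ξ ^ 3 ∧ 3 ∣ b - d}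
  add_mem' := by
    rintro _ _ ⟨a, b, c, d, rfl, hbd⟩ ⟨a', b', c', d', rfl, hbd'⟩
    exact ⟨a + a', b + b', c + c', d + d', by push_cast; ring,
      by rw [add_sub_add_comm]; exact dvd_add hbd hbd'⟩
  mul_mem' := by
    rintro _ _ ⟨a, b, c, d, rfl, k, hk⟩ ⟨a', b', c', d', rfl, k', hk'⟩
    -- modulo 3, `b - d` is the imaginary part of the image under `ℤ[ξ] → 𝔽₃[i]`, `ξ ↦ i`
    refine ⟨a * a' - b * d' - c * c' - d * b' - d * d', a * b' + b * a' - c * d' - d * c',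
      a * c' + b * b' + c * a' + b * d' + c * c' + d * b',
      a * d' + b * c' + c * b' + d * a' + c * d' + d * c', ?_,
      (a - c) * k' + (a' - c') * k - (c * d' + d * c'), ?_⟩
    · push_cast
      linear_combination
        (d * d' * ξ ^ 2 + (c * d' + d * c') * ξ + (b * d' + c * c' + d * b' + d * d') : A) * hΦ
    · linear_combination (a - c) * hk' + (a' - c') * hk
  algebraMap_mem' r := ⟨r, 0, 0, 0, by simp, by simp⟩

namespace Module.Basis

variable {O : Subalgebra ℤ A} (B : Module.Basis (Fin 4) ℤ O) (hB : ∀ i, (B i : A) = ξ ^ (i : ℕ))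
include hB

theorem coe_eq_sum_equivFun_mul_pow (x : O) :
    (x : A) = B.equivFun x 0 + B.equivFun x 1 * ξ + B.equivFun x 2 * ξ ^ 2
      + B.equivFun x 3 * ξ ^ 3 := by
  conv_lhs => rw [← B.sum_equivFun x]
  simp [Fin.sum_univ_four, hB, zsmul_eq_mul]

theorem equivFun_eq_of_coe_eq {x : O} {a b c d : ℤ}
    (hx : (x : A) = a + b * ξ + c * ξ ^ 2 + d * ξ ^ 3) : B.equivFun x = ![a, b, c, d] := by
  apply B.equivFun.symm.injective
  ext
  rw [LinearEquiv.symm_apply_apply]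
  simp [Fin.sum_univ_four, hB, zsmul_eq_mul, hx]

end Module.Basis

theorem relIndex_spOrder (hΦ : ξ ^ 4 = ξ ^ 2 - 1) {O : Subalgebra ℤ A}
    (B : Module.Basis (Fin 4) ℤ O) (hB : ∀ i, (B i : A) = ξ ^ (i : ℕ)) :
    (spOrder hΦ).toSubring.toAddSubgroup.relIndex O.toSubring.toAddSubgroup = 3 := by
  let f : O.toSubring.toAddSubgroup →+ ZMod 3 :=
    (Int.castAddHom (ZMod 3)).comp
      ((LinearMap.proj (R := ℤ) (φ := fun _ : Fin 4 ↦ ℤ) 1 - LinearMap.proj 3) ∘ₗ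
        B.equivFun.toLinearMap).toAddMonoidHom
  have hf : ∀ x, f x = ((B.equivFun x 1 - B.equivFun x 3 : ℤ) : ZMod 3) := fun x ↦ rfl
  have hker :
      f.ker = (spOrder hΦ).toSubring.toAddSubgroup.addSubgroupOf O.toSubring.toAddSubgroup := by
    ext x
    rw [AddMonoidHom.mem_ker, AddSubgroup.mem_addSubgroupOf, hf, ZMod.intCast_zmod_eq_zero_iff_dvd]
    constructor
    · exact fun h ↦ ⟨_, _, _, _, B.coe_eq_sum_equivFun_mul_pow hB x, by exact_mod_cast h⟩
    · rintro ⟨a, b, c, d, hx, hbd⟩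
      simpa [B.equivFun_eq_of_coe_eq hB hx] using hbd
  have hsurj : Function.Surjective f := by
    have hξO : ξ ∈ O := by simpa [hB] using (B 1).2
    intro r
    obtain ⟨k, rfl⟩ := ZMod.intCast_surjective r
    refine ⟨k • ⟨ξ, hξO⟩, ?_⟩
    rw [map_zsmul, hf, B.equivFun_eq_of_coe_eq hB (a := 0) (b := 1) (c := 0) (d := 0) (by simp)]
    simp
  rw [AddSubgroup.relIndex, ← hker, AddSubgroup.index_ker, AddMonoidHom.range_eq_top.2 hsurj,
    AddSubgroup.card_top, Nat.card_zmod]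

theorem adjoin_eq_spOrder {L : Type*} [Field L] (h3 : (3 : L) ≠ 0) {ξ π : L}
    (hΦ : ξ ^ 4 = ξ ^ 2 - 1) (hπ : π = (ξ + ξ⁻¹) * ξ ^ 4) :
    Algebra.adjoin ℤ {π, 3 * π⁻¹, π ^ 2 / 3} = spOrder hΦ := by
  have hξinv : ξ⁻¹ = ξ - ξ ^ 3 := inv_eq_of_mul_eq_one_right (by linear_combination -hΦ)
  have hπ' : π = 2 * ξ ^ 3 - ξ := by
    rw [hπ, hξinv]; linear_combination (ξ - ξ ^ 3) * hΦ
  have hπ_mul : π * (-ξ ^ 3 - ξ) = 3 := by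
    rw [hπ']; linear_combination (-2 * ξ ^ 2 - 3) * hΦ
  have hπinv : 3 * π⁻¹ = -ξ ^ 3 - ξ := by
    have hπ0 : π ≠ 0 := left_ne_zero_of_mul (hπ_mul ▸ h3)
    rw [← hπ_mul, mul_comm π, mul_assoc, mul_inv_cancel₀ hπ0, mul_one]
  have hπsq : π ^ 2 / 3 = -ξ ^ 2 := by
    rw [div_eq_iff h3, hπ']; linear_combination 4 * ξ ^ 2 * hΦ
  apply le_antisymm
  · rw [Algebra.adjoin_le_iff]
    rintro x (rfl | rfl | rfl)
    · exact ⟨0, -1, 0, 2, by rw [hπ']; push_cast; ring, by norm_num⟩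
    · exact ⟨0, -1, 0, -1, by rw [hπinv]; push_cast; ring, by norm_num⟩
    · exact ⟨0, 0, -1, 0, by rw [hπsq]; push_cast; ring, by norm_num⟩
  · rintro _ ⟨a, b, c, d, rfl, k, hk⟩
    have hk' : (b : L) - d = 3 * k := by simpa using congrArg (Int.cast : ℤ → L) hk
    have hx : (a + b * ξ + c * ξ ^ 2 + d * ξ ^ 3 : L) = a + ((-c : ℤ) : L) * (π ^ 2 / 3)
        + ((-k : ℤ) : L) * π + ((k - b : ℤ) : L) * (3 * π⁻¹) := by
      rw [hπsq, hπinv, hπ']; push_cast; linear_combination -ξ ^ 3 * hk'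
    have hgen : ∀ y ∈ ({π, 3 * π⁻¹, π ^ 2 / 3} : Set L),
        y ∈ Algebra.adjoin ℤ {π, 3 * π⁻¹, π ^ 2 / 3} :=
      fun y hy ↦ Algebra.subset_adjoin hy
    rw [hx]
    refine add_mem (add_mem (add_mem ?_ (mul_mem ?_ (hgen _ ?_))) (mul_mem ?_ (hgen _ ?_)))
      (mul_mem ?_ (hgen _ ?_)) <;> first | exact intCast_mem _ _ | simp

end SpOrder

/-- Let `π = √3·ζ₃` and `L = ℚ(π) = ℚ(ζ₁₂)`, whose ring of integers is `O_L = ℤ[ζ₁₂]`.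
Then the order `R_sp = ℤ[π, 3·π⁻¹, π²/3]` has (additive) index `3` in `O_L`.
(Here `√3 = ξ + ξ⁻¹` and `ζ₃ = ξ⁴` for `ξ = ζ₁₂`.) -/
theorem stmt13 (L : Type) [Field L] [Algebra ℚ L]
    (ξ : L) (hξ : IsPrimitiveRoot ξ 12)
    (hL : IntermediateField.adjoin ℚ ({ξ} : Set L) = ⊤)
    (π : L) (hπ : π = (ξ + ξ⁻¹) * ξ ^ 4) :
    integralClosure ℤ L = Algebra.adjoin ℤ ({ξ} : Set L) ∧
    AddSubgroup.relIndex
      ((Algebra.adjoin ℤ ({π, 3 * π⁻¹, π ^ 2 / 3} : Set L)).toSubring.toAddSubgroup)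
      ((integralClosure ℤ L).toSubring.toAddSubgroup) = 3 := by
  have : CharZero L := charZero_of_injective_algebraMap (algebraMap ℚ L).injective
  obtain rfl : ‹Algebra ℚ L› = DivisionRing.toRatAlgebra := Subsingleton.elim _ _
  have := hξ.isCyclotomicExtension_of_adjoin_eq_top hL
  have hO : integralClosure ℤ L = Algebra.adjoin ℤ {ξ} := hξ.integralClosure_eq_adjoin
  obtain ⟨B, hB⟩ := hξ.exists_basis_adjoin_int (by norm_num) (d := 4) rfl
  refine ⟨hO, ?_⟩
  rw [hO, adjoin_eq_spOrder three_ne_zero hξ.pow_four_eq_sq_sub_one hπ]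
  exact relIndex_spOrder _ B hB
end
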